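/- arXiv:1612.06839 — 2 statements merged into one kernel-verified Lean document; each statement's English description precedes it below -/
import Mathlib

section
/- Let A be an m×n real matrix and let x ∈ {0,1}^n with x_i = 1 for 1 ≤ i ≤ k and x_i = 0 for k+1 ≤ i ≤ n. Suppose that for every w ∈ ℝ^n with Aw = 0, w_i ≤ 0 for 1 ≤ i ≤ k, w_i ≥ 0 for k+1 ≤ i ≤ n, and w ≠ 0, we have -∑_{i=1}^k w_i < ∑_{i=k+1}^n w_i. Then x is the unique minimizer of ‖z‖₁ over all z ∈ [0,1]^n with Az = Ax. -/
open Finset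

theorem stmt_0 (m n k : ℕ) (hk : k ≤ n) (A : Matrix (Fin m) (Fin n) ℝ)
    (x : Fin n → ℝ) (hx : x = fun i => if i.val < k then (1:ℝ) else 0)
    (hnull : ∀ w : Fin n → ℝ, A.mulVec w = 0 →
      (∀ i : Fin n, (i : ℕ) < k → w i ≤ 0) →
      (∀ i : Fin n, k ≤ (i : ℕ) → 0 ≤ w i) → w ≠ 0 →
      -∑ i ∈ univ.filter (fun i : Fin n => (i : ℕ) < k), w i
        < ∑ i ∈ univ.filter (fun i : Fin n => k ≤ (i : ℕ)), w i) :
    ∀ z : Fin n → ℝ, (∀ i, z i ∈ Set.Icc (0:ℝ) 1) → A.mulVec z = A.mulVec x →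
      z ≠ x → ∑ i, |x i| < ∑ i, |z i| := by
  intro z hz hAz hne
  set w : Fin n → ℝ := fun i => z i - x i with hw
  have hAw : A.mulVec w = 0 := by
    have hwz : w = z - x := rfl
    rw [hwz, Matrix.mulVec_sub, hAz, sub_self]
  have h1 : ∀ i : Fin n, (i : ℕ) < k → w i ≤ 0 := by
    intro i hi
    have := (hz i).2
    simp [hw, hx, hi]
    linarith
  have h2 : ∀ i : Fin n, k ≤ (i : ℕ) → 0 ≤ w i := by
    intro i hi
    have := (hz i).1
    simp [hw, hx, Nat.not_lt.mpr hi]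
    linarith
  have hwne : w ≠ 0 := by
    intro h
    apply hne
    funext i
    have : w i = 0 := congrFun h i
    simpa [hw, sub_eq_zero] using this
  have key := hnull w hAw h1 h2 hwne
  have habs_x : ∀ i, |x i| = x i := by
    intro i
    rw [hx]
    by_cases h : (i : ℕ) < k <;> simp [h]
  have habs_z : ∀ i, |z i| = z i := fun i => abs_of_nonneg (hz i).1
  simp_rw [habs_x, habs_z]
  have hsplit : ∀ v : Fin n → ℝ, ∑ i, v i =
      ∑ i ∈ univ.filter (fun i : Fin n => (i : ℕ) < k), v i
        + ∑ i ∈ univ.filter (fun i : Fin n => k ≤ (i : ℕ)), v i := by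
    intro v
    rw [← Finset.sum_filter_add_sum_filter_not univ (fun i : Fin n => (i : ℕ) < k)]
    congr 1
    apply Finset.sum_congr _ (fun _ _ => rfl)
    ext i
    simp [Nat.not_lt]
  have hzz : ∑ i, z i = ∑ i, x i + ∑ i, w i := by
    simp [hw, Finset.sum_add_distrib, Finset.sum_sub_distrib]
  rw [hzz]
  have : 0 < ∑ i, w i := by
    rw [hsplit w]
    linarith
  linarith
end

section
/- Let A be an m×n real matrix, 0 ≤ k_μ, k with k_μ + k ≤ n, and let x ∈ [0,1]^n with x_i = 1 for 1 ≤ i ≤ k_μ, x_i ∈ (0,1) for k_μ+1 ≤ i ≤ k_μ+k, and x_i = 0 for i > k_μ+k. Suppose for every nonzero w ∈ ℝ^n with Aw = 0, w_i ≤ 0 for 1 ≤ i ≤ k_μ, and w_i ≥ 0 for i > k_μ+k, we have -∑_{i=k_μ+1}^{k_μ+k} w_i < ∑_{i=1}^{k_μ} w_i + ∑_{i=k_μ+k+1}^n w_i. Then x is the unique minimizer of ‖z‖₁ over z ∈ [0,1]^n with Az = Ax. -/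
open Finset

theorem stmt_12 (m n kμ k : ℕ) (h : kμ + k ≤ n) (A : Matrix (Fin m) (Fin n) ℝ)
    (x : Fin n → ℝ)
    (hx1 : ∀ i : Fin n, i.val < kμ → x i = 1)
    (hx2 : ∀ i : Fin n, kμ ≤ i.val → i.val < kμ + k → 0 < x i ∧ x i < 1)
    (hx3 : ∀ i : Fin n, kμ + k ≤ i.val → x i = 0)
    (hnull : ∀ w : Fin n → ℝ, w ≠ 0 → A.mulVec w = 0 →
      (∀ i : Fin n, i.val < kμ → w i ≤ 0) →
      (∀ i : Fin n, kμ + k ≤ i.val → 0 ≤ w i) →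
      -∑ i ∈ univ.filter (fun i : Fin n => kμ ≤ i.val ∧ i.val < kμ + k), w i
        < ∑ i ∈ univ.filter (fun i : Fin n => i.val < kμ), w i
          + ∑ i ∈ univ.filter (fun i : Fin n => kμ + k ≤ i.val), w i) :
    ∀ z : Fin n → ℝ, (∀ i, z i ∈ Set.Icc (0:ℝ) 1) → A.mulVec z = A.mulVec x →
      z ≠ x → ∑ i, |x i| < ∑ i, |z i| := by
  intro z hz hAz hzx
  set w : Fin n → ℝ := z - x with hw
  have hw0 : w ≠ 0 := by
    intro hc
    exact hzx (sub_eq_zero.mp hc)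
  have hAw : A.mulVec w = 0 := by
    rw [hw, Matrix.mulVec_sub, hAz, sub_self]
  have hneg : ∀ i : Fin n, i.val < kμ → w i ≤ 0 := by
    intro i hi
    have := (hz i).2
    have hx := hx1 i hi
    simp only [hw, Pi.sub_apply]
    linarith
  have hpos : ∀ i : Fin n, kμ + k ≤ i.val → 0 ≤ w i := by
    intro i hi
    have := (hz i).1
    have hx := hx3 i hi
    simp only [hw, Pi.sub_apply]
    linarith
  have key := hnull w hw0 hAw hneg hpos
  have hxnn : ∀ i : Fin n, 0 ≤ x i := by
    intro i
    rcases lt_or_ge i.val kμ with hi | hi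
    · rw [hx1 i hi]; norm_num
    · rcases lt_or_ge i.val (kμ + k) with hi2 | hi2
      · exact (hx2 i hi hi2).1.le
      · rw [hx3 i hi2]
  have h1 := Finset.sum_filter_add_sum_filter_not univ (fun i : Fin n => i.val < kμ) w
  have h2 := Finset.sum_filter_add_sum_filter_not
    (univ.filter (fun i : Fin n => ¬ i.val < kμ)) (fun i : Fin n => i.val < kμ + k) w
  have e1 : (univ.filter (fun i : Fin n => ¬ i.val < kμ)).filter (fun i => i.val < kμ + k)
      = univ.filter (fun i : Fin n => kμ ≤ i.val ∧ i.val < kμ + k) := by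
    ext i; simp only [mem_filter, mem_univ, true_and, not_lt]; all_goals omega
  have e2 : (univ.filter (fun i : Fin n => ¬ i.val < kμ)).filter (fun i => ¬ i.val < kμ + k)
      = univ.filter (fun i : Fin n => kμ + k ≤ i.val) := by
    ext i; simp only [mem_filter, mem_univ, true_and, not_lt]; all_goals omega
  rw [e1, e2] at h2
  have hsum : ∑ i, w i = ∑ i, z i - ∑ i, x i := by
    simp [hw, Finset.sum_sub_distrib]
  have habs_x : ∑ i, |x i| = ∑ i, x i :=
    Finset.sum_congr rfl (fun i _ => abs_of_nonneg (hxnn i))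
  have habs_z : ∑ i, |z i| = ∑ i, z i :=
    Finset.sum_congr rfl (fun i _ => abs_of_nonneg (hz i).1)
  rw [habs_x, habs_z]
  linarith
end
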